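/- arXiv:1609.06839 — 4 statements merged into one kernel-verified Lean document; each statement's English description precedes it below -/
import Mathlib

section
/- Correctness of the Deflated GMRES algorithm: if x^# ∈ ℂ^N is any solution of the deflated (singular) system P A x = P b, then the vector x := Z M⁻¹ Zᴴ b + P̃ x^# solves the original system, i.e. A x = b. -/
/-! With `Q := Z M⁻¹ Zᴴ` we have `P = 1 - A Q`, `P̃ = 1 - Q A` and hence `A P̃ = P A`. Therefore
`A (Q b + P̃ x^#) = (1 - P) b + P A x^# = (1 - P) b + P b = b`. -/

open Matrix

theorem mul_one_sub_mul_eq_one_sub_mul_mul {R : Type*} [Ring R] (A Q : R) :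
    A * (1 - Q * A) = (1 - A * Q) * A := by
  simp only [mul_sub, sub_mul, mul_one, one_mul, mul_assoc]

theorem Matrix.mulVec_add_one_sub_mul_mulVec_eq {n R : Type*} [Fintype n] [DecidableEq n] [Ring R]
    {A Q : Matrix n n R} {b x : n → R} (hx : ((1 - A * Q) * A) *ᵥ x = (1 - A * Q) *ᵥ b) :
    A *ᵥ (Q *ᵥ b + (1 - Q * A) *ᵥ x) = b := by
  calc A *ᵥ (Q *ᵥ b + (1 - Q * A) *ᵥ x)
      = (A * Q) *ᵥ b + (A * (1 - Q * A)) *ᵥ x := by rw [mulVec_add, mulVec_mulVec, mulVec_mulVec]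
    _ = (A * Q) *ᵥ b + (1 - A * Q) *ᵥ b := by rw [mul_one_sub_mul_eq_one_sub_mul_mul, hx]
    _ = b := by rw [sub_mulVec, one_mulVec, add_sub_cancel]

theorem deflated_gmres_correctness_general
    (N m : ℕ)
    (A : Matrix (Fin N) (Fin N) ℂ) (Z : Matrix (Fin N) (Fin m) ℂ)
    (M : Matrix (Fin m) (Fin m) ℂ)
    (P Pt : Matrix (Fin N) (Fin N) ℂ)
    (hP : P = 1 - A * Z * M⁻¹ * Zᴴ) (hPt : Pt = 1 - Z * M⁻¹ * Zᴴ * A)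
    (b xsharp : Fin N → ℂ) (hxsharp : (P * A) *ᵥ xsharp = P *ᵥ b) :
    A *ᵥ ((Z * M⁻¹ * Zᴴ) *ᵥ b + Pt *ᵥ xsharp) = b := by
  have hAQ : A * Z * M⁻¹ * Zᴴ = A * (Z * M⁻¹ * Zᴴ) := by simp only [Matrix.mul_assoc]
  rw [hP, hAQ] at hxsharp
  rw [hPt]
  exact mulVec_add_one_sub_mul_mulVec_eq hxsharp

theorem deflated_gmres_correctness
    (N m : ℕ) (hN : 0 < N) (hm : 0 < m) (hmN : m ≤ N)
    (A : Matrix (Fin N) (Fin N) ℂ) (Z : Matrix (Fin N) (Fin m) ℂ)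
    (M : Matrix (Fin m) (Fin m) ℂ) (hM : M = Zᴴ * A * Z) (hMinv : IsUnit M)
    (P Pt : Matrix (Fin N) (Fin N) ℂ)
    (hP : P = 1 - A * Z * M⁻¹ * Zᴴ) (hPt : Pt = 1 - Z * M⁻¹ * Zᴴ * A)
    (b xsharp : Fin N → ℂ) (hxsharp : (P * A) *ᵥ xsharp = P *ᵥ b) :
    A *ᵥ ((Z * M⁻¹ * Zᴴ) *ᵥ b + Pt *ᵥ xsharp) = b :=
  deflated_gmres_correctness_general N m A Z M P Pt hP hPt b xsharp hxsharp
end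

section
/- Deflation by exact eigenvectors removes exactly the corresponding eigenvalues and replaces them by zeros: the characteristic polynomial of P A equals X^m · ∏_{j=m+1}^{N} (X − λ_j). In particular the spectrum of P A is {0} ∪ {λ_{m+1}, …, λ_N}. -/
open Matrix Polynomial

/-!
In the eigenbasis `V` the matrix `A` becomes `diagonal l`, the columns `Z` become the first `m`
coordinate vectors `E`, and `V⁻¹ P A V` is again a deflation of the same shape. Any deflation kills the deflation space: `P A Z = A Z - A Z M⁻¹ M = 0`, so the first `m`
columns of `V⁻¹ P A V` vanish. Since `diagonal l * E` vanishes in rows `i ≥ m`, those rows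
of `V⁻¹ P A V` are the rows of `diagonal l`. Hence `V⁻¹ P A V` is upper triangular with diagonal
`0, …, 0, l m, …, l (N - 1)`, which gives the characteristic polynomial and thus the spectrum.
-/

namespace Matrix

variable {n k R : Type*} [Fintype n] [DecidableEq n] [Fintype k] [DecidableEq k] [CommRing R]

theorem mul_submatrix_one_id {l o : Type*} (M : Matrix l n R) (e : o → n) :
    M * (1 : Matrix n n R).submatrix id e = M.submatrix id e :=
  mul_submatrix_one (Equiv.refl n) e M

/-- `P = deflation A Z Zᴴ`; the general left factor `W` makes deflations stable under a change
of basis. -/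
noncomputable def deflation (A : Matrix n n R) (Z : Matrix n k R) (W : Matrix k n R) :
    Matrix n n R :=
  1 - A * Z * (W * A * Z)⁻¹ * W

theorem deflation_mul_mul_eq_zero {A : Matrix n n R} {Z : Matrix n k R} {W : Matrix k n R}
    (h : IsUnit (W * A * Z)) : deflation A Z W * A * Z = 0 := by
  calc deflation A Z W * A * Z = A * Z - A * Z * ((W * A * Z)⁻¹ * (W * A * Z)) := by
        simp only [deflation, Matrix.sub_mul, Matrix.one_mul, Matrix.mul_assoc]
    _ = 0 := by rw [nonsing_inv_mul _ ((isUnit_iff_isUnit_det _).mp h), Matrix.mul_one, sub_self]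

theorem deflation_mul_apply_of_forall_mul_apply_eq_zero {A : Matrix n n R} {Z : Matrix n k R}
    (W : Matrix k n R) {i : n} (hi : ∀ c, (A * Z) i c = 0) (j : n) :
    (deflation A Z W * A) i j = A i j := by
  have hexpand : deflation A Z W * A = A - A * Z * ((W * A * Z)⁻¹ * W * A) := by
    simp only [deflation, Matrix.sub_mul, Matrix.one_mul, Matrix.mul_assoc]
  rw [hexpand, sub_apply, mul_apply, Finset.sum_eq_zero fun c _ => by rw [hi c, zero_mul],
    sub_zero]

theorem inv_mul_deflation_mul_mul {V : Matrix n n R} (hV : IsUnit V) (A : Matrix n n R)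
    (Z : Matrix n k R) (W : Matrix k n R) :
    V⁻¹ * (deflation A Z W * A) * V =
      deflation (V⁻¹ * A * V) (V⁻¹ * Z) (W * V) * (V⁻¹ * A * V) := by
  simp only [deflation, Matrix.sub_mul, Matrix.mul_sub, Matrix.one_mul, Matrix.mul_assoc,
    mul_nonsing_inv_cancel_left _ _ ((isUnit_iff_isUnit_det V).mp hV)]

theorem charpoly_eq_X_pow_mul_prod_of_cols_eq_zero_of_rows_eq_diagonal {N m : ℕ} (hmN : m ≤ N)
    (B : Matrix (Fin N) (Fin N) R) (d : Fin N → R)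
    (hcol : ∀ i (j : Fin N), (j : ℕ) < m → B i j = 0)
    (hrow : ∀ (i : Fin N) j, m ≤ (i : ℕ) → B i j = diagonal d i j) :
    B.charpoly =
      X ^ m * ∏ j ∈ Finset.univ.filter (fun j : Fin N => m ≤ (j : ℕ)), (X - C (d j)) := by
  have htri : B.IsUpperTriangular := fun i j (hji : j < i) => by
    by_cases hj : (j : ℕ) < m
    · exact hcol i j hj
    · rw [hrow i j (by omega), diagonal_apply_ne _ hji.ne']
  have hdiag : ∀ i, X - C (B i i) = if m ≤ (i : ℕ) then X - C (d i) else X := by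
    intro i
    split_ifs with hi
    · rw [hrow i i hi, diagonal_apply_eq]
    · rw [hcol i i (by omega), map_zero, sub_zero]
  rw [charpoly_of_isUpperTriangular B htri, Finset.prod_congr rfl fun i _ => hdiag i,
    Finset.prod_ite, mul_comm, Finset.prod_const]
  congr 2
  simpa [not_le, Fin.card_filter_val_lt] using hmN

theorem charpoly_deflation_diagonal_mul {N m : ℕ} (hmN : m ≤ N) (d : Fin N → R)
    {W : Matrix (Fin m) (Fin N) R}
    (hW : IsUnit (W * diagonal d * (1 : Matrix (Fin N) (Fin N) R).submatrix id (Fin.castLE hmN))) :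
    (deflation (diagonal d) ((1 : Matrix (Fin N) (Fin N) R).submatrix id (Fin.castLE hmN)) W *
        diagonal d).charpoly =
      X ^ m * ∏ j ∈ Finset.univ.filter (fun j : Fin N => m ≤ (j : ℕ)), (X - C (d j)) := by
  refine charpoly_eq_X_pow_mul_prod_of_cols_eq_zero_of_rows_eq_diagonal hmN _ d
    (fun i j hj => ?_) (fun i j hi => ?_)
  · have hcols := deflation_mul_mul_eq_zero hW
    rw [mul_submatrix_one_id] at hcols
    exact congr_fun (congr_fun hcols i) ⟨j, hj⟩
  · refine deflation_mul_apply_of_forall_mul_apply_eq_zero W (fun c => ?_) j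
    have hic : i ≠ Fin.castLE hmN c := fun h => by simp [h] at hi; omega
    exact (diagonal_mul d _ i c).trans (mul_eq_zero_of_right _ (one_apply_ne hic))

end Matrix

theorem deflation_by_exact_eigenvectors_charpoly_general
    (N m : ℕ) (hm : 0 < m) (hmN : m ≤ N)
    (A V : Matrix (Fin N) (Fin N) ℂ) (l : Fin N → ℂ)
    (hV : IsUnit V) (hA : A = V * Matrix.diagonal l * V⁻¹)
    (Z : Matrix (Fin N) (Fin m) ℂ)
    (hZ : Z = Matrix.of fun (i : Fin N) (j : Fin m) => V i (Fin.castLE hmN j))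
    (M : Matrix (Fin m) (Fin m) ℂ) (hM : M = Zᴴ * A * Z) (hMinv : IsUnit M)
    (P : Matrix (Fin N) (Fin N) ℂ) (hP : P = 1 - A * Z * M⁻¹ * Zᴴ) :
    (P * A).charpoly =
        X ^ m *
          ∏ j ∈ Finset.univ.filter (fun j : Fin N => m ≤ (j : ℕ)), (X - C (l j)) ∧
      spectrum ℂ (P * A) =
        {0} ∪ {z : ℂ | ∃ j : Fin N, m ≤ (j : ℕ) ∧ z = l j} := by
  have hVdet := (isUnit_iff_isUnit_det V).mp hV
  have hVA : V⁻¹ * A * V = diagonal l := by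
    rw [hA, Matrix.mul_assoc, Matrix.mul_assoc, nonsing_inv_mul _ hVdet, Matrix.mul_one,
      nonsing_inv_mul_cancel_left _ _ hVdet]
  have hVZ : V⁻¹ * Z = (1 : Matrix (Fin N) (Fin N) ℂ).submatrix id (Fin.castLE hmN) := by
    have hZV : Z = V * (1 : Matrix (Fin N) (Fin N) ℂ).submatrix id (Fin.castLE hmN) := by
      rw [hZ, mul_submatrix_one_id]
      rfl
    rw [hZV, nonsing_inv_mul_cancel_left _ _ hVdet]
  have hWAZ : Zᴴ * V * (V⁻¹ * A * V) * (V⁻¹ * Z) = M := by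
    simp only [hM, Matrix.mul_assoc, mul_nonsing_inv_cancel_left _ _ hVdet]
  have hcharpoly : (P * A).charpoly =
      X ^ m * ∏ j ∈ Finset.univ.filter (fun j : Fin N => m ≤ (j : ℕ)), (X - C (l j)) := by
    rw [← charpoly_units_conj' hV.unit, IsUnit.unit_spec, hP, hM, ← deflation,
      inv_mul_deflation_mul_mul hV, hVA, hVZ]
    exact charpoly_deflation_diagonal_mul hmN l (by rwa [← hVA, ← hVZ, hWAZ])
  refine ⟨hcharpoly, Set.ext fun z => ?_⟩
  simp [mem_spectrum_iff_isRoot_charpoly, hcharpoly, hm.ne', eval_prod, Finset.prod_eq_zero_iff,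
    sub_eq_zero]

theorem deflation_by_exact_eigenvectors_charpoly
    (N m : ℕ) (hN : 0 < N) (hm : 0 < m) (hmN : m ≤ N)
    (A V : Matrix (Fin N) (Fin N) ℂ) (l : Fin N → ℂ)
    (hV : IsUnit V) (hA : A = V * Matrix.diagonal l * V⁻¹)
    (Z : Matrix (Fin N) (Fin m) ℂ)
    (hZ : Z = Matrix.of fun (i : Fin N) (j : Fin m) => V i (Fin.castLE hmN j))
    (M : Matrix (Fin m) (Fin m) ℂ) (hM : M = Zᴴ * A * Z) (hMinv : IsUnit M)
    (P : Matrix (Fin N) (Fin N) ℂ) (hP : P = 1 - A * Z * M⁻¹ * Zᴴ) :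
    (P * A).charpoly =
        X ^ m *
          ∏ j ∈ Finset.univ.filter (fun j : Fin N => m ≤ (j : ℕ)), (X - C (l j)) ∧
      spectrum ℂ (P * A) =
        {0} ∪ {z : ℂ | ∃ j : Fin N, m ≤ (j : ℕ) ∧ z = l j} :=
  deflation_by_exact_eigenvectors_charpoly_general N m hm hmN A V l hV hA Z hZ M hM hMinv P hP
end

section
/- The spectral projector associated with a circle enclosing part of the spectrum is idempotent: P_Γ² = P_Γ. -/
open Matrix Metric Complex Set

attribute [local instance] Matrix.linftyOpNormedRing Matrix.linftyOpNormedAlgebra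

section Aux
variable {N : ℕ}

private noncomputable def entryCLM (i j : Fin N) : Matrix (Fin N) (Fin N) ℂ →L[ℂ] ℂ :=
  LinearMap.toContinuousLinearMap
    { toFun := fun M => M i j
      map_add' := fun _ _ => rfl
      map_smul' := fun _ _ => rfl }

private noncomputable def mulLeftCLM (B : Matrix (Fin N) (Fin N) ℂ) :
    Matrix (Fin N) (Fin N) ℂ →L[ℂ] Matrix (Fin N) (Fin N) ℂ :=
  LinearMap.toContinuousLinearMap (LinearMap.mulLeft ℂ B)

private noncomputable def mulRightCLM (B : Matrix (Fin N) (Fin N) ℂ) :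
    Matrix (Fin N) (Fin N) ℂ →L[ℂ] Matrix (Fin N) (Fin N) ℂ :=
  LinearMap.toContinuousLinearMap (LinearMap.mulRight ℂ B)

private lemma circleIntegral_CLM_comm {E F : Type*} [NormedAddCommGroup E] [NormedSpace ℂ E]
    [CompleteSpace E] [NormedAddCommGroup F] [NormedSpace ℂ F] [CompleteSpace F]
    (L : E →L[ℂ] F) {f : ℂ → E} {c : ℂ} {R : ℝ} (hf : CircleIntegrable f c R) :
    (∮ z in C(c, R), L (f z)) = L (∮ z in C(c, R), f z) := by
  simp only [circleIntegral]
  rw [← L.intervalIntegral_comp_comm hf.out]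
  congr 1
  ext θ
  rw [L.map_smul]

private lemma circleIntegral_entry {f : ℂ → Matrix (Fin N) (Fin N) ℂ} {c : ℂ} {R : ℝ}
    (hf : CircleIntegrable f c R) (i j : Fin N) :
    (∮ z in C(c, R), f z) i j = ∮ z in C(c, R), f z i j :=
  (circleIntegral_CLM_comm (entryCLM i j) hf).symm

/-- The resolvent of a matrix. -/
private noncomputable def resMat (N : ℕ) (A : Matrix (Fin N) (Fin N) ℂ) (z : ℂ) :
    Matrix (Fin N) (Fin N) ℂ :=
  Ring.inverse (z • (1 : Matrix (Fin N) (Fin N) ℂ) - A)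

private lemma resMat_eq_resolvent (A : Matrix (Fin N) (Fin N) ℂ) :
    resolvent A = resMat N A := by
  funext z
  simp [resolvent, resMat, Algebra.algebraMap_eq_smul_one]

private lemma mem_resolventSet_iff' (A : Matrix (Fin N) (Fin N) ℂ) (z : ℂ) :
    z ∈ resolventSet ℂ A ↔ IsUnit (z • (1 : Matrix (Fin N) (Fin N) ℂ) - A) := by
  rw [spectrum.mem_resolventSet_iff, Algebra.algebraMap_eq_smul_one]

private lemma resMat_differentiableAt (A : Matrix (Fin N) (Fin N) ℂ) {z : ℂ}
    (hz : z ∈ resolventSet ℂ A) : DifferentiableAt ℂ (resMat N A) z := by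
  rw [← resMat_eq_resolvent]
  exact (spectrum.hasDerivAt_resolvent hz).differentiableAt

/-- First resolvent identity. -/
private lemma resMat_mul_resMat (A : Matrix (Fin N) (Fin N) ℂ) {z w : ℂ}
    (hz : IsUnit (z • (1 : Matrix (Fin N) (Fin N) ℂ) - A))
    (hw : IsUnit (w • (1 : Matrix (Fin N) (Fin N) ℂ) - A)) (hzw : z ≠ w) :
    resMat N A z * resMat N A w = (w - z)⁻¹ • (resMat N A z - resMat N A w) := by
  have key : resMat N A z - resMat N A w = (w - z) • (resMat N A z * resMat N A w) := by
    have hz1 : resMat N A z * (z • (1 : Matrix (Fin N) (Fin N) ℂ) - A) = 1 :=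
      Ring.inverse_mul_cancel _ hz
    have hw1 : (w • (1 : Matrix (Fin N) (Fin N) ℂ) - A) * resMat N A w = 1 :=
      Ring.mul_inverse_cancel _ hw
    calc resMat N A z - resMat N A w
        = resMat N A z * ((w • (1 : Matrix (Fin N) (Fin N) ℂ) - A) * resMat N A w)
            - (resMat N A z * (z • (1 : Matrix (Fin N) (Fin N) ℂ) - A)) * resMat N A w := by
          rw [hw1, hz1, mul_one, one_mul]
      _ = resMat N A z * (((w • (1 : Matrix (Fin N) (Fin N) ℂ) - A)
            - (z • (1 : Matrix (Fin N) (Fin N) ℂ) - A)) * resMat N A w) := by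
          noncomm_ring
      _ = (w - z) • (resMat N A z * resMat N A w) := by
          rw [sub_sub_sub_cancel_right, ← sub_smul, smul_mul_assoc, mul_smul_comm, one_mul]
  rw [key, smul_smul, inv_mul_cancel₀ (sub_ne_zero.2 (Ne.symm hzw)), one_smul]

private lemma annulus_mem_cthickening {c w : ℂ} {r r' δ : ℝ} (hr'0 : 0 < r')
    (h1 : r' ≤ dist w c) (h2 : dist w c ≤ r) (hδ : r - r' ≤ δ) :
    w ∈ Metric.cthickening δ (sphere c r) := by
  have ht0 : 0 < dist w c := lt_of_lt_of_le hr'0 h1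
  have hr0 : 0 < r := lt_of_lt_of_le ht0 h2
  set t : ℝ := dist w c with ht
  set p : ℂ := c + (↑(r / t) : ℂ) * (w - c) with hp
  have hwc : ‖w - c‖ = t := by rw [ht, dist_eq_norm]
  have hps : p ∈ sphere c r := by
    simp only [mem_sphere_iff_norm, hp, add_sub_cancel_left]
    rw [norm_mul, hwc, Complex.norm_real, Real.norm_eq_abs,
      abs_of_pos (div_pos hr0 ht0), div_mul_cancel₀ _ (ne_of_gt ht0)]
  have hd : dist w p ≤ δ := by
    have hwp : w - p = (↑(1 - r / t) : ℂ) * (w - c) := by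
      rw [hp]
      push_cast
      ring
    have : dist w p = |1 - r / t| * t := by
      rw [dist_eq_norm, hwp, norm_mul, Complex.norm_real, Real.norm_eq_abs, hwc]
    rw [this, abs_of_nonpos (by rw [sub_nonpos]; exact (le_div_iff₀ ht0).2 (by linarith)),
      neg_sub, sub_mul, div_mul_cancel₀ _ (ne_of_gt ht0), one_mul]
    linarith
  exact Metric.mem_cthickening_of_dist_le w p δ _ hps hd

end Aux
/-- The spectral projector `P_Γ = (1/(2πi)) ∮_{|z-c|=r} (zI - A)⁻¹ dz`,
with the contour integral over the positively oriented circle of center `c`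
and radius `r` taken entrywise. -/
noncomputable def spectralProjector (N : ℕ) (A : Matrix (Fin N) (Fin N) ℂ)
    (c : ℂ) (r : ℝ) : Matrix (Fin N) (Fin N) ℂ :=
  Matrix.of fun i j =>
    (2 * Real.pi * Complex.I)⁻¹ *
      ∮ z in C(c, r), ((z • (1 : Matrix (Fin N) (Fin N) ℂ) - A)⁻¹ i j)

theorem spectral_projector_idempotent
    (N : ℕ) (hN : 0 < N) (A : Matrix (Fin N) (Fin N) ℂ) (c : ℂ) (r : ℝ)
    (hr : 0 < r)
    (hres : ∀ z : ℂ, ‖z - c‖ = r →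
      IsUnit (z • (1 : Matrix (Fin N) (Fin N) ℂ) - A)) :
    spectralProjector N A c r * spectralProjector N A c r =
      spectralProjector N A c r := by
  have hsph : sphere c r ⊆ resolventSet ℂ A := by
    intro z hz
    rw [mem_resolventSet_iff']
    exact hres z (by rw [mem_sphere, dist_eq_norm] at hz; simpa using hz)
  obtain ⟨δ, hδ0, hδ⟩ := (isCompact_sphere c r).exists_cthickening_subset_open
    (spectrum.isOpen_resolventSet A) hsph
  set r' : ℝ := r - min δ r / 2 with hr'def
  have hmin0 : 0 < min δ r := lt_min hδ0 hr
  have hminr : min δ r ≤ r := min_le_right _ _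
  have hr'0 : 0 < r' := by rw [hr'def]; linarith
  have hr'r : r' < r := by rw [hr'def]; linarith
  have hann : ∀ w : ℂ, r' ≤ dist w c → dist w c ≤ r → w ∈ resolventSet ℂ A := by
    intro w h1 h2
    refine hδ (annulus_mem_cthickening hr'0 h1 h2 ?_)
    rw [hr'def]
    have := min_le_left δ r
    linarith
  have hsph' : sphere c r' ⊆ resolventSet ℂ A := by
    intro z hz
    rw [mem_sphere] at hz
    exact hann z (le_of_eq hz.symm) (by rw [hz]; exact hr'r.le)
  have hcontOn : ∀ {S : Set ℂ}, S ⊆ resolventSet ℂ A → ContinuousOn (resMat N A) S :=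
    fun hS z hz => ((resMat_differentiableAt A (hS hz)).continuousAt).continuousWithinAt
  have hint_r : CircleIntegrable (resMat N A) c r :=
    ContinuousOn.circleIntegrable hr.le (hcontOn hsph)
  have hint_r' : CircleIntegrable (resMat N A) c r' :=
    ContinuousOn.circleIntegrable hr'0.le (hcontOn hsph')
  -- deformation of the contour
  have hdeform : (∮ z in C(c, r), resMat N A z) = ∮ z in C(c, r'), resMat N A z := by
    refine circleIntegral_eq_of_differentiable_on_annulus_off_countable hr'0 hr'r.le
      countable_empty (hcontOn ?_) ?_
    · intro w hw
      rw [mem_diff, mem_closedBall, mem_ball, not_lt] at hw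
      exact hann w hw.2 hw.1
    · intro w hw
      rw [mem_diff, mem_diff, mem_ball, mem_closedBall, not_le] at hw
      exact resMat_differentiableAt A (hann w hw.1.2.le hw.1.1.le)
  -- matrix form of the spectral projector
  have hSP : ∀ (R : ℝ), 0 ≤ R → CircleIntegrable (resMat N A) c R →
      spectralProjector N A c R
        = (2 * (Real.pi : ℂ) * Complex.I)⁻¹ • ∮ z in C(c, R), resMat N A z := by
    intro R hR0 hint
    ext i j
    simp only [spectralProjector, Matrix.of_apply, Matrix.smul_apply, smul_eq_mul]
    rw [circleIntegral_entry hint i j]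
    congr 1
    refine circleIntegral.integral_congr hR0 fun z _ => ?_
    exact congrFun (congrFun (Matrix.nonsing_inv_eq_ringInverse _) i) j
  set U := ∮ z in C(c, r'), resMat N A z with hU
  set V := ∮ z in C(c, r), resMat N A z with hV
  -- differentiability of the Cauchy-type integral on the ball
  have hG : ∀ z ∈ ball c r,
      DifferentiableAt ℂ (fun z => ∮ w in C(c, r), (w - z)⁻¹ • resMat N A w) z := by
    intro z hz
    have hps := hasFPowerSeriesOn_cauchy_integral
      (f := resMat N A) (c := c) (R := ⟨r, hr.le⟩) hint_r (by exact_mod_cast hr)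
    have hd2 : DifferentiableAt ℂ (fun w => (2 * (Real.pi : ℂ) * Complex.I)⁻¹ •
        ∮ zz in C(c, r), (zz - w)⁻¹ • resMat N A zz) z := by
      have := hps.differentiableOn.differentiableAt (x := z)
        (by exact Metric.isOpen_eball.mem_nhds (by rw [Metric.mem_eball, edist_dist]; exact (ENNReal.ofReal_lt_iff_lt_toReal dist_nonneg ENNReal.coe_ne_top).2 hz))
      exact this
    have := hd2.const_smul (2 * (Real.pi : ℂ) * Complex.I)
    refine this.congr_of_eventuallyEq ?_
    refine Filter.Eventually.of_forall fun w => ?_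
    simp only [Pi.smul_apply, smul_smul,
      mul_inv_cancel₀ (show (2 * (Real.pi : ℂ) * Complex.I) ≠ 0 by
        simp [Real.pi_ne_zero, Complex.I_ne_zero]), one_smul]
  -- the Cauchy-type integral integrates to zero over the inner circle
  have hGzero : (∮ z in C(c, r'), ∮ w in C(c, r), (w - z)⁻¹ • resMat N A w) = 0 := by
    refine circleIntegral_eq_zero_of_differentiable_on_off_countable hr'0.le countable_empty
      ?_ ?_
    · intro z hz
      exact (hG z (closedBall_subset_ball hr'r hz)).continuousAt.continuousWithinAt
    · intro z hz
      exact hG z (ball_subset_ball hr'r.le hz.1)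
  -- the inner computation
  have hinner : ∀ z ∈ sphere c r', resMat N A z * V
      = (2 * (Real.pi : ℂ) * Complex.I) • resMat N A z
        - ∮ w in C(c, r), (w - z)⁻¹ • resMat N A w := by
    intro z hz
    have hzρ : z ∈ resolventSet ℂ A := hsph' hz
    rw [mem_sphere] at hz
    have hzBall : z ∈ ball c r := by rw [mem_ball, hz]; exact hr'r
    have hzUnit : IsUnit (z • (1 : Matrix (Fin N) (Fin N) ℂ) - A) :=
      (mem_resolventSet_iff' A z).1 hzρ
    have hne : ∀ w ∈ sphere c r, w ≠ z := by
      intro w hw he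
      rw [mem_sphere] at hw
      rw [he, hz] at hw
      exact absurd hw hr'r.ne
    have h1 : resMat N A z * V = ∮ w in C(c, r), resMat N A z * resMat N A w := by
      have := circleIntegral_CLM_comm (mulLeftCLM (resMat N A z)) hint_r
      exact this.symm
    have h2 : (∮ w in C(c, r), resMat N A z * resMat N A w)
        = ∮ w in C(c, r), ((w - z)⁻¹ • resMat N A z - (w - z)⁻¹ • resMat N A w) := by
      refine circleIntegral.integral_congr hr.le fun w hw => ?_
      have hwUnit : IsUnit (w • (1 : Matrix (Fin N) (Fin N) ℂ) - A) :=
        (mem_resolventSet_iff' A w).1 (hsph hw)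
      rw [resMat_mul_resMat A hzUnit hwUnit (fun he => hne w hw he.symm), smul_sub]
    have hcinv : ContinuousOn (fun w : ℂ => (w - z)⁻¹) (sphere c r) := by
      refine ContinuousOn.inv₀ (by fun_prop) fun w hw => sub_ne_zero.2 (hne w hw)
    have hint1 : CircleIntegrable (fun w => (w - z)⁻¹ • resMat N A z) c r :=
      ContinuousOn.circleIntegrable hr.le (hcinv.smul continuousOn_const)
    have hint2 : CircleIntegrable (fun w => (w - z)⁻¹ • resMat N A w) c r :=
      ContinuousOn.circleIntegrable hr.le (hcinv.smul (hcontOn hsph))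
    rw [h1, h2, circleIntegral.integral_sub hint1 hint2,
      circleIntegral.integral_smul_const, circleIntegral.integral_sub_inv_of_mem_ball hzBall]
  -- the outer computation
  have houter : U * V = (2 * (Real.pi : ℂ) * Complex.I) • U := by
    have h1 : U * V = ∮ z in C(c, r'), resMat N A z * V := by
      have := circleIntegral_CLM_comm (mulRightCLM V) hint_r'
      exact this.symm
    have hint1 : CircleIntegrable
        (fun z => (2 * (Real.pi : ℂ) * Complex.I) • resMat N A z) c r' :=
      ContinuousOn.circleIntegrable hr'0.le (ContinuousOn.smul (f := fun _ => (2 * (Real.pi : ℂ) * Complex.I)) continuousOn_const (hcontOn hsph'))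
    have hint2 : CircleIntegrable
        (fun z => ∮ w in C(c, r), (w - z)⁻¹ • resMat N A w) c r' := by
      refine ContinuousOn.circleIntegrable hr'0.le fun z hz => ?_
      have hzball : z ∈ ball c r := by
        rw [mem_sphere] at hz
        rw [mem_ball, hz]; exact hr'r
      exact (hG z hzball).continuousAt.continuousWithinAt
    rw [h1, circleIntegral.integral_congr hr'0.le hinner,
      circleIntegral.integral_sub hint1 hint2, hGzero, sub_zero,
      circleIntegral.integral_smul, ← hU]
  -- put everything together
  have hPr : spectralProjector N A c r = (2 * (Real.pi : ℂ) * Complex.I)⁻¹ • U := by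
    rw [hSP r hr.le hint_r, ← hV, hdeform.trans hU.symm]
  have hVU : V = U := hdeform
  have ha : (2 * (Real.pi : ℂ) * Complex.I) ≠ 0 := by
    simp [Real.pi_ne_zero, Complex.I_ne_zero]
  rw [hVU] at houter
  rw [hPr, smul_mul_smul_comm]
  rw [houter, smul_smul]
  congr 1
  field_simp
end

section
/- For a diagonalizable matrix, the range of the spectral projector is the sum of the eigenspaces enclosed by the circle: if additionally A = V Λ V⁻¹ with V = [v₁, …, v_N] invertible and Λ = diag(λ₁, …, λ_N), then the range of the linear map x ↦ P_Γ x equals span{v_i : |λ_i − c| < r}. -/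
open Matrix

theorem range_spectral_projector_eq_span_inner_eigenvectors
    (N : ℕ) (hN : 0 < N) (A : Matrix (Fin N) (Fin N) ℂ) (c : ℂ) (r : ℝ)
    (hr : 0 < r)
    (hres : ∀ z : ℂ, ‖z - c‖ = r →
      IsUnit (z • (1 : Matrix (Fin N) (Fin N) ℂ) - A))
    (V : Matrix (Fin N) (Fin N) ℂ) (l : Fin N → ℂ)
    (hV : IsUnit V) (hA : A = V * Matrix.diagonal l * V⁻¹) :
    LinearMap.range (spectralProjector N A c r).mulVecLin =
      Submodule.span ℂ
        {v : Fin N → ℂ |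
          ∃ i : Fin N, ‖l i - c‖ < r ∧ v = fun k => V k i} := by
  classical
  have hVdet : IsUnit V.det := (Matrix.isUnit_iff_isUnit_det V).mp hV
  have hVV : V * V⁻¹ = 1 := Matrix.mul_nonsing_inv V hVdet
  have hVV' : V⁻¹ * V = 1 := Matrix.nonsing_inv_mul V hVdet
  -- conjugation identity for the resolvent
  have key : ∀ z : ℂ, z • (1 : Matrix (Fin N) (Fin N) ℂ) - A
      = V * Matrix.diagonal (fun k => z - l k) * V⁻¹ := by
    intro z
    have hd : z • (1 : Matrix (Fin N) (Fin N) ℂ) - Matrix.diagonal l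
        = Matrix.diagonal (fun k => z - l k) := by
      ext i j
      by_cases h : i = j <;>
        simp [h, Matrix.one_apply, Matrix.diagonal_apply, Matrix.sub_apply]
    rw [hA, ← hd]
    rw [Matrix.mul_sub, Matrix.sub_mul, Matrix.mul_smul, Matrix.mul_one,
      Matrix.smul_mul, hVV]
  -- no eigenvalue lies on the circle
  have hne : ∀ i : Fin N, ‖l i - c‖ ≠ r := by
    intro i hi
    have h := hres (l i) hi
    rw [Matrix.isUnit_iff_isUnit_det, key (l i)] at h
    have hdet0 : (Matrix.diagonal fun k => l i - l k).det = 0 := by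
      rw [Matrix.det_diagonal]
      exact Finset.prod_eq_zero (Finset.mem_univ i) (by simp)
    rw [Matrix.det_mul, Matrix.det_mul, hdet0] at h
    simp at h
  have hz_ne : ∀ z : ℂ, ‖z - c‖ = r → ∀ k, z - l k ≠ 0 := by
    intro z hz k h
    apply hne k
    rw [sub_eq_zero] at h
    rw [← h]; exact hz
  -- resolvent formula on the circle
  have inv_eq : ∀ z : ℂ, ‖z - c‖ = r →
      (z • (1 : Matrix (Fin N) (Fin N) ℂ) - A)⁻¹
        = V * Matrix.diagonal (fun k => (z - l k)⁻¹) * V⁻¹ := by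
    intro z hz
    apply Matrix.inv_eq_right_inv
    rw [key z]
    have : (Matrix.diagonal fun k => z - l k) *
        (Matrix.diagonal fun k => (z - l k)⁻¹) = 1 := by
      rw [Matrix.diagonal_mul_diagonal]
      convert Matrix.diagonal_one using 2
      funext k
      exact mul_inv_cancel₀ (hz_ne z hz k)
    calc V * Matrix.diagonal (fun k => z - l k) * V⁻¹ *
          (V * Matrix.diagonal (fun k => (z - l k)⁻¹) * V⁻¹)
        = V * Matrix.diagonal (fun k => z - l k) * (V⁻¹ * V) *
            Matrix.diagonal (fun k => (z - l k)⁻¹) * V⁻¹ := by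
          simp only [Matrix.mul_assoc]
      _ = 1 := by
          rw [hVV', Matrix.mul_one, Matrix.mul_assoc V, this, Matrix.mul_one, hVV]
  set d : Fin N → ℂ := fun k => if ‖l k - c‖ < r then 1 else 0 with hd_def
  -- the value of the scalar contour integrals
  have hint : ∀ k : Fin N,
      (∮ z in C(c, r), (z - l k)⁻¹) = (2 * Real.pi * Complex.I) * d k := by
    intro k
    by_cases h : ‖l k - c‖ < r
    · have : l k ∈ Metric.ball c r := by
        rw [Metric.mem_ball, Complex.dist_eq]; exact h
      rw [circleIntegral.integral_sub_inv_of_mem_ball this]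
      simp [hd_def, h]
    · have hgt : r < ‖l k - c‖ := lt_of_le_of_ne (not_lt.mp h) (Ne.symm (hne k))
      have hz : (∮ z in C(c, r), (z - l k)⁻¹) = 0 := by
        apply Complex.circleIntegral_eq_zero_of_differentiable_on_off_countable hr.le
          Set.countable_empty
        · intro z hz
          apply ContinuousAt.continuousWithinAt
          apply ContinuousAt.inv₀ (by fun_prop)
          intro h0
          rw [sub_eq_zero] at h0
          subst h0
          rw [Metric.mem_closedBall, Complex.dist_eq] at hz
          exact absurd hz (not_le.mpr hgt)
        · intro z hz
          apply DifferentiableAt.inv (by fun_prop)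
          intro h0
          rw [sub_eq_zero] at h0
          subst h0
          rw [Set.diff_empty, Metric.mem_ball, Complex.dist_eq] at hz
          exact absurd hz (not_lt.mpr hgt.le)
      rw [hz]
      simp [hd_def, h]
  have h2pi : (2 * (Real.pi : ℂ) * Complex.I) ≠ 0 := Complex.two_pi_I_ne_zero
  -- compute the projector
  have proj_eq : spectralProjector N A c r = V * Matrix.diagonal d * V⁻¹ := by
    ext i j
    show (2 * Real.pi * Complex.I)⁻¹ *
        (∮ z in C(c, r), ((z • (1 : Matrix (Fin N) (Fin N) ℂ) - A)⁻¹ i j))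
      = (V * Matrix.diagonal d * V⁻¹) i j
    have step1 : (∮ z in C(c, r), ((z • (1 : Matrix (Fin N) (Fin N) ℂ) - A)⁻¹ i j))
        = ∮ z in C(c, r), ∑ k, V i k * V⁻¹ k j * (z - l k)⁻¹ := by
      apply circleIntegral.integral_congr hr.le
      intro z hz
      rw [Metric.mem_sphere, Complex.dist_eq] at hz
      show ((z • (1 : Matrix (Fin N) (Fin N) ℂ) - A)⁻¹ i j) = _
      rw [inv_eq z hz]
      simp only [Matrix.mul_apply, Matrix.diagonal_apply, mul_ite, mul_zero,
        ite_mul, zero_mul, Finset.sum_ite_eq', Finset.mem_univ, if_true]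
      exact Finset.sum_congr rfl fun k _ => by ring
    have step2 : (∮ z in C(c, r), ∑ k, V i k * V⁻¹ k j * (z - l k)⁻¹)
        = ∑ k, ∮ z in C(c, r), V i k * V⁻¹ k j * (z - l k)⁻¹ := by
      simp only [circleIntegral]
      rw [← intervalIntegral.integral_finset_sum]
      · simp [Finset.mul_sum]
      · intro k _
        apply ContinuousOn.intervalIntegrable
        apply Continuous.continuousOn
        simp only [deriv_circleMap]
        have hcont : Continuous fun θ : ℝ => (circleMap c r θ - l k)⁻¹ := by
          apply Continuous.inv₀ ((continuous_circleMap c r).sub continuous_const)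
          intro θ
          exact hz_ne _ (by simpa [Complex.dist_eq] using
            (circleMap_mem_sphere c hr.le θ)) k
        exact ((continuous_circleMap 0 r).mul continuous_const).smul
          (continuous_const.mul hcont)
    rw [step1, step2]
    have step3 : ∀ k, (∮ z in C(c, r), V i k * V⁻¹ k j * (z - l k)⁻¹)
        = V i k * V⁻¹ k j * ((2 * Real.pi * Complex.I) * d k) := by
      intro k
      rw [circleIntegral.integral_const_mul, hint k]
    simp only [step3]
    rw [Finset.mul_sum, Matrix.mul_apply]
    apply Finset.sum_congr rfl
    intro k _
    rw [Matrix.mul_diagonal]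
    rw [show (2 * (Real.pi : ℂ) * Complex.I)⁻¹ *
        (V i k * V⁻¹ k j * (2 * (Real.pi : ℂ) * Complex.I * d k))
      = V i k * d k * V⁻¹ k j * ((2 * (Real.pi : ℂ) * Complex.I)⁻¹ *
          (2 * (Real.pi : ℂ) * Complex.I)) from by ring]
    rw [inv_mul_cancel₀ h2pi, mul_one]
  rw [proj_eq]
  -- linear algebra part
  have hsurj : Function.Surjective (V⁻¹).mulVecLin := by
    intro y
    exact ⟨V.mulVec y, by simp [Matrix.mulVec_mulVec, hVV']⟩
  rw [Matrix.mulVecLin_mul, Matrix.mulVecLin_mul, LinearMap.range_comp,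
    LinearMap.range_eq_top.mpr hsurj, Submodule.map_top, LinearMap.range_comp]
  have hrange : LinearMap.range (Matrix.diagonal d).mulVecLin
      = Submodule.span ℂ {v : Fin N → ℂ | ∃ i : Fin N,
          ‖l i - c‖ < r ∧ v = Pi.single i 1} := by
    apply le_antisymm
    · rintro y ⟨x, rfl⟩
      have hDx : (Matrix.diagonal d).mulVecLin x
          = ∑ k, (x k * d k) • (Pi.single k 1 : Fin N → ℂ) := by
        funext m
        simp only [Matrix.mulVecLin_apply, Matrix.mulVec_diagonal,
          Finset.sum_apply, Pi.smul_apply, Pi.single_apply, smul_eq_mul,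
          mul_ite, mul_one, mul_zero]
        rw [Finset.sum_ite_eq Finset.univ m fun k => x k * d k]
        simp [mul_comm]
      rw [hDx]
      apply Submodule.sum_mem
      intro k _
      by_cases h : ‖l k - c‖ < r
      · exact Submodule.smul_mem _ _ (Submodule.subset_span ⟨k, h, rfl⟩)
      · have hdk : d k = 0 := by simp [hd_def, h]
        rw [hdk, mul_zero, zero_smul]
        exact Submodule.zero_mem _
    · rw [Submodule.span_le]
      rintro v ⟨i, hi, rfl⟩
      refine ⟨Pi.single i 1, ?_⟩
      have hdi : d i = 1 := by simp [hd_def, hi]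
      funext m
      simp only [Matrix.mulVecLin_apply, Matrix.mulVec_single, mul_one]
      rw [Pi.smul_apply, MulOpposite.op_one, one_smul, Matrix.col_apply, Matrix.diagonal_apply]
      by_cases h : m = i <;> simp [h, hdi, Pi.single_apply]
  rw [hrange, Submodule.map_span]
  congr 1
  ext v
  constructor
  · rintro ⟨w, ⟨i, hi, rfl⟩, rfl⟩
    refine ⟨i, hi, ?_⟩
    funext k
    simp [Matrix.mulVecLin_apply]
  · rintro ⟨i, hi, rfl⟩
    refine ⟨Pi.single i 1, ⟨i, hi, rfl⟩, ?_⟩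
    funext k
    simp [Matrix.mulVecLin_apply]
end
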